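/- arXiv:1111.3304 — 2 statements merged into one kernel-verified Lean document; each statement's English description precedes it below -/
import Mathlib

section
/- With the setup of the previous statement, the matrix 𝓗 = D^{-1} H satisfies 𝓗 = Υ (D^{-1} 𝓐) Υ^{-1}, where Υ is the 3N×3N block-diagonal matrix with blocks h_1,...,h_N and 𝓐 = A^P ⊗ I_3. Consequently 𝓗 and D^{-1}𝓐 have the same eigenvalues, and every eigenvalue of 𝓗 is an eigenvalue of Δ^{-1} A^P (with multiplicity 3). -/
/-!
Writing `Υ` for the block-diagonal matrix of the `h i`, the `(i, j)` block of `Υ (A ⊗ I) Υᵀ` is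
`A i j • h i * (h j)ᵀ`. Taking `A = Δ⁻¹ A^P`, whose Kronecker product with `I` is `D⁻¹ 𝓐`, this is
exactly the `(i, j)` block of `D⁻¹ H`; and orthogonality of the `h i` gives `Υ⁻¹ = Υᵀ`. An
eigenvector `v` of `D⁻¹ H` is then carried to the eigenvector `Υ⁻¹ v` of `(Δ⁻¹ A^P) ⊗ I`, and any
nonzero slice `j ↦ w (j, k)` of an eigenvector `w` of `B ⊗ I` is an eigenvector of `B`.
-/

open Matrix Kronecker

namespace Matrix

variable {ι κ R : Type*} [Fintype ι] [Fintype κ] [DecidableEq κ] [CommRing R]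

/-- Mathlib's `blockDiagonal` indexes by `κ × ι`, block index last; here it comes first. -/
def blockDiagonalFst [DecidableEq ι] (h : ι → Matrix κ κ R) : Matrix (ι × κ) (ι × κ) R :=
  (blockDiagonal h).submatrix (Equiv.prodComm ι κ) (Equiv.prodComm ι κ)

section BlockDiagonalFst

variable [DecidableEq ι] (h : ι → Matrix κ κ R)

omit [Fintype ι] [Fintype κ] [DecidableEq κ] in
theorem blockDiagonalFst_apply (p q : ι × κ) :
    blockDiagonalFst h p q = if p.1 = q.1 then h p.1 p.2 q.2 else 0 := by
  simp [blockDiagonalFst, blockDiagonal_apply]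

theorem blockDiagonalFst_transpose_mul_self (horth : ∀ i, (h i)ᵀ * h i = 1) :
    (blockDiagonalFst h)ᵀ * blockDiagonalFst h = 1 := by
  rw [blockDiagonalFst, transpose_submatrix, submatrix_mul_equiv, blockDiagonal_transpose,
    ← blockDiagonal_mul, funext horth, ← Pi.one_def, blockDiagonal_one, submatrix_one_equiv]

theorem inv_blockDiagonalFst (horth : ∀ i, (h i)ᵀ * h i = 1) :
    (blockDiagonalFst h)⁻¹ = (blockDiagonalFst h)ᵀ :=
  inv_eq_left_inv (blockDiagonalFst_transpose_mul_self h horth)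

theorem blockDiagonalFst_mul_kronecker_one_apply (A : Matrix ι ι R) (p q : ι × κ) :
    (blockDiagonalFst h * (A ⊗ₖ (1 : Matrix κ κ R))) p q = A p.1 q.1 * h p.1 p.2 q.2 := by
  simp [mul_apply, blockDiagonalFst_apply, Fintype.sum_prod_type, one_apply, mul_comm]

omit [DecidableEq κ] in
theorem mul_transpose_blockDiagonalFst_apply (M : Matrix (ι × κ) (ι × κ) R) (p q : ι × κ) :
    (M * (blockDiagonalFst h)ᵀ) p q = ∑ b, M p (q.1, b) * h q.1 q.2 b := by
  simp [mul_apply, blockDiagonalFst_apply, Fintype.sum_prod_type]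

theorem blockDiagonalFst_mul_kronecker_one_mul_transpose (A : Matrix ι ι R) :
    blockDiagonalFst h * (A ⊗ₖ (1 : Matrix κ κ R)) * (blockDiagonalFst h)ᵀ =
      of fun p q => A p.1 q.1 * (h p.1 * (h q.1)ᵀ) p.2 q.2 := by
  ext p q
  simp_rw [mul_transpose_blockDiagonalFst_apply, blockDiagonalFst_mul_kronecker_one_apply, of_apply,
    mul_apply, transpose_apply, Finset.mul_sum, mul_assoc]

end BlockDiagonalFst

omit [Fintype ι] [Fintype κ] in
theorem diagonal_kronecker_one [DecidableEq ι] (d : ι → R) :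
    diagonal d ⊗ₖ (1 : Matrix κ κ R) = diagonal fun p => d p.1 := by
  rw [← diagonal_one, diagonal_kronecker_diagonal]
  simp

theorem kronecker_one_mulVec_apply (B : Matrix ι ι R) (w : ι × κ → R) (i : ι) (k : κ) :
    ((B ⊗ₖ (1 : Matrix κ κ R)) *ᵥ w) (i, k) = (B *ᵥ fun j => w (j, k)) i := by
  simp [mulVec, dotProduct, Fintype.sum_prod_type, one_apply]

theorem exists_mulVec_eq_smul_of_kronecker_one {B : Matrix ι ι R} {w : ι × κ → R} {μ : R}
    (hw : w ≠ 0) (hB : (B ⊗ₖ (1 : Matrix κ κ R)) *ᵥ w = μ • w) :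
    ∃ u : ι → R, u ≠ 0 ∧ B *ᵥ u = μ • u := by
  obtain ⟨⟨i, k⟩, hik⟩ := Function.ne_iff.mp hw
  refine ⟨fun j => w (j, k), Function.ne_iff.mpr ⟨i, hik⟩, funext fun j => ?_⟩
  rw [← kronecker_one_mulVec_apply, hB]
  rfl

theorem exists_mulVec_eq_smul_of_eq_conj [DecidableEq ι] {M B P : Matrix ι ι R}
    (hP : IsUnit P.det) (hM : M = P * B * P⁻¹) {v : ι → R} {μ : R} (hv : v ≠ 0)
    (hMv : M *ᵥ v = μ • v) :
    ∃ w, w ≠ 0 ∧ B *ᵥ w = μ • w := by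
  refine ⟨P⁻¹ *ᵥ v, fun h0 => hv ?_, ?_⟩
  · simpa [mulVec_mulVec, mul_nonsing_inv _ hP] using congrArg (P *ᵥ ·) h0
  · have hBP : B * P⁻¹ = P⁻¹ * M := by
      rw [hM, ← Matrix.mul_assoc, ← Matrix.mul_assoc, nonsing_inv_mul _ hP, Matrix.one_mul]
    rw [mulVec_mulVec, hBP, ← mulVec_mulVec, hMv, mulVec_smul]

end Matrix

theorem stmt_5_general (N : ℕ) (G : SimpleGraph (Fin N)) [DecidableRel G.Adj]
    (h : Fin N → Matrix (Fin 3) (Fin 3) ℝ)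
    (horth : ∀ i, (h i)ᵀ * h i = 1)
    (H : Matrix (Fin N × Fin 3) (Fin N × Fin 3) ℝ)
    (hH : ∀ p q, H p q = if G.Adj p.1 q.1 then (h p.1 * (h q.1)ᵀ) p.2 q.2 else 0)
    (AP : Matrix (Fin N) (Fin N) ℝ)
    (hAP : ∀ i j, AP i j = if G.Adj i j then 1 else 0)
    (Dinv : Matrix (Fin N × Fin 3) (Fin N × Fin 3) ℝ)
    (hD : Dinv = Matrix.diagonal fun p => ((G.degree p.1 : ℝ))⁻¹)
    (Δinv : Matrix (Fin N) (Fin N) ℝ)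
    (hΔ : Δinv = Matrix.diagonal fun i => ((G.degree i : ℝ))⁻¹)
    (Υ : Matrix (Fin N × Fin 3) (Fin N × Fin 3) ℝ)
    (hΥ : ∀ p q, Υ p q = if p.1 = q.1 then h p.1 p.2 q.2 else 0) :
    Dinv * H = Υ * (Dinv * (AP ⊗ₖ (1 : Matrix (Fin 3) (Fin 3) ℝ))) * Υ⁻¹
    ∧ ∀ (mu : ℝ) (v : Fin N × Fin 3 → ℝ), v ≠ 0 → (Dinv * H) *ᵥ v = mu • v →
        (∃ w : Fin N × Fin 3 → ℝ, w ≠ 0 ∧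
            (Dinv * (AP ⊗ₖ (1 : Matrix (Fin 3) (Fin 3) ℝ))) *ᵥ w = mu • w)
        ∧ ∃ u : Fin N → ℝ, u ≠ 0 ∧ (Δinv * AP) *ᵥ u = mu • u := by
  obtain rfl : Υ = blockDiagonalFst h :=
    ext fun p q => (hΥ p q).trans (blockDiagonalFst_apply h p q).symm
  have hDinv : Dinv * (AP ⊗ₖ (1 : Matrix (Fin 3) (Fin 3) ℝ)) = (Δinv * AP) ⊗ₖ 1 := by
    have hDΔ : Dinv = Δinv ⊗ₖ 1 := by rw [hD, hΔ, diagonal_kronecker_one]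
    rw [hDΔ, ← mul_kronecker_mul, Matrix.one_mul]
  have hconj : Dinv * H = blockDiagonalFst h * (Dinv * (AP ⊗ₖ 1)) * (blockDiagonalFst h)⁻¹ := by
    rw [hDinv, inv_blockDiagonalFst h horth, blockDiagonalFst_mul_kronecker_one_mul_transpose]
    ext p q
    simp [hD, hΔ, hH, hAP, diagonal_mul]
  have hunit : IsUnit (blockDiagonalFst h).det :=
    isUnit_det_of_left_inverse (blockDiagonalFst_transpose_mul_self h horth)
  refine ⟨hconj, fun mu v hv hev => ?_⟩
  obtain ⟨w, hw, hwev⟩ := exists_mulVec_eq_smul_of_eq_conj hunit hconj hv hev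
  exact ⟨⟨w, hw, hwev⟩, exists_mulVec_eq_smul_of_kronecker_one hw (hDinv ▸ hwev)⟩

/-- With `H` the block matrix with blocks `h_i h_jᵀ` on edges of `G^P` (zero
otherwise), `D = Δ ⊗ I₃` the block degree matrix, `Υ` the block diagonal matrix with blocks
`h_1,...,h_N`, and `𝓐 = A^P ⊗ I₃`, we have `D⁻¹H = Υ (D⁻¹𝓐) Υ⁻¹`; consequently every
eigenvalue of `𝓗 = D⁻¹H` is an eigenvalue of `D⁻¹𝓐`, hence of `Δ⁻¹A^P` (with multiplicity 3). -/
theorem stmt_5 (N : ℕ) (G : SimpleGraph (Fin N)) [DecidableRel G.Adj]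
    (hdeg : ∀ i, 0 < G.degree i)
    (h : Fin N → Matrix (Fin 3) (Fin 3) ℝ)
    (horth : ∀ i, (h i)ᵀ * h i = 1)
    (H : Matrix (Fin N × Fin 3) (Fin N × Fin 3) ℝ)
    (hH : ∀ p q, H p q = if G.Adj p.1 q.1 then (h p.1 * (h q.1)ᵀ) p.2 q.2 else 0)
    (AP : Matrix (Fin N) (Fin N) ℝ)
    (hAP : ∀ i j, AP i j = if G.Adj i j then 1 else 0)
    (Dinv : Matrix (Fin N × Fin 3) (Fin N × Fin 3) ℝ)
    (hD : Dinv = Matrix.diagonal fun p => ((G.degree p.1 : ℝ))⁻¹)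
    (Δinv : Matrix (Fin N) (Fin N) ℝ)
    (hΔ : Δinv = Matrix.diagonal fun i => ((G.degree i : ℝ))⁻¹)
    (Υ : Matrix (Fin N × Fin 3) (Fin N × Fin 3) ℝ)
    (hΥ : ∀ p q, Υ p q = if p.1 = q.1 then h p.1 p.2 q.2 else 0) :
    Dinv * H = Υ * (Dinv * (AP ⊗ₖ (1 : Matrix (Fin 3) (Fin 3) ℝ))) * Υ⁻¹
    ∧ ∀ (mu : ℝ) (v : Fin N × Fin 3 → ℝ), v ≠ 0 → (Dinv * H) *ᵥ v = mu • v →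
        (∃ w : Fin N × Fin 3 → ℝ, w ≠ 0 ∧
            (Dinv * (AP ⊗ₖ (1 : Matrix (Fin 3) (Fin 3) ℝ))) *ᵥ w = mu • w)
        ∧ ∃ u : Fin N → ℝ, u ≠ 0 ∧ (Δinv * AP) *ᵥ u = mu • u :=
  stmt_5_general N G h horth H hH AP hAP Dinv hD Δinv hΔ Υ hΥ
end

section
/- Let h_1,...,h_N, ĥ_1,...,ĥ_N ∈ O(3), Q = (1/N) Σ_{i=1}^N ĥ_i h_i^T with singular values σ_1, σ_2, σ_3. Then min_{O ∈ O(3)} (1/N) Σ_{i=1}^N ‖h_i − O ĥ_i‖_F^2 = 6 − 2(σ_1 + σ_2 + σ_3). In particular, if Q ∈ O(3) then the minimum is 0. -/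
open Matrix BigOperators

/-!
Expanding the square, `‖h - O ĥ‖_F² = 6 - 2 tr(O ĥ hᵀ)` for orthogonal `h, ĥ, O`, so the mean
cost is `6 - 2 tr(O Q)`. With `Q = U Σ Vᵀ`, `tr(O Q) = Σᵢ Wᵢᵢ σᵢ` where `W = Vᵀ O U` is
orthogonal, hence has entries at most `1`; this bounds `tr(O Q)` by `Σᵢ σᵢ`, with equality at
`O = V Uᵀ` (where `W = 1`). If `Q` is orthogonal then `V Σ² Vᵀ = QᵀQ = 1` forces every `σᵢ = 1`.
-/

section Frobenius

variable {m n R : Type*} [Fintype m] [Fintype n]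

lemma sum_sum_sq_eq_trace_transpose_mul_self [Semiring R] (M : Matrix m n R) :
    ∑ a, ∑ b, M a b ^ 2 = (Mᵀ * M).trace := by
  simp only [trace, diag, mul_apply, transpose_apply, sq]
  exact Finset.sum_comm

variable [DecidableEq n] [CommRing R]

lemma sum_sum_sq_sub_mul_of_orthogonal {A B O : Matrix n n R}
    (hA : Aᵀ * A = 1) (hB : Bᵀ * B = 1) (hO : Oᵀ * O = 1) :
    ∑ a, ∑ b, (A - O * B) a b ^ 2 = 2 * Fintype.card n - 2 * (O * (B * Aᵀ)).trace := by
  have hexpand : (A - O * B)ᵀ * (A - O * B)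
      = Aᵀ * A - Aᵀ * (O * B) - (Aᵀ * (O * B))ᵀ + Bᵀ * (Oᵀ * O) * B := by
    simp only [transpose_sub, transpose_mul, transpose_transpose]
    noncomm_ring
  have hcycle : (Aᵀ * (O * B)).trace = (O * (B * Aᵀ)).trace := by
    rw [trace_mul_comm, Matrix.mul_assoc]
  rw [sum_sum_sq_eq_trace_transpose_mul_self, hexpand, hO, Matrix.mul_one, hA, hB]
  simp only [trace_add, trace_sub, trace_transpose, trace_one, hcycle]
  ring

end Frobenius

lemma mean_sum_sum_sq_sub_mul_of_orthogonal {ι n R : Type*} [Fintype ι] [Nonempty ι]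
    [Fintype n] [DecidableEq n] [Field R] [CharZero R] {h hhat : ι → Matrix n n R}
    (horth : ∀ i, (h i)ᵀ * h i = 1) (hhatorth : ∀ i, (hhat i)ᵀ * hhat i = 1)
    {O : Matrix n n R} (hO : Oᵀ * O = 1) :
    (Fintype.card ι : R)⁻¹ * ∑ i, ∑ a, ∑ b, (h i - O * hhat i) a b ^ 2
      = 2 * Fintype.card n
        - 2 * (O * ((Fintype.card ι : R)⁻¹ • ∑ i, hhat i * (h i)ᵀ)).trace := by
  simp only [sum_sum_sq_sub_mul_of_orthogonal (horth _) (hhatorth _) hO,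
    Finset.sum_sub_distrib, Finset.sum_const, Finset.card_univ, nsmul_eq_mul, ← Finset.mul_sum,
    ← trace_sum, Matrix.mul_smul, trace_smul, smul_eq_mul]
  field_simp

section CommRing

variable {n R : Type*} [Fintype n] [DecidableEq n] [CommRing R] {A B : Matrix n n R}

lemma transpose_mul_self_eq_one_mul (hA : Aᵀ * A = 1) (hB : Bᵀ * B = 1) :
    (A * B)ᵀ * (A * B) = 1 := by
  rw [transpose_mul, Matrix.mul_assoc, ← Matrix.mul_assoc Aᵀ, hA, Matrix.one_mul, hB]

lemma transpose_mul_self_eq_one_transpose (hA : Aᵀ * A = 1) : Aᵀᵀ * Aᵀ = 1 := by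
  rw [transpose_transpose]
  exact mul_eq_one_comm.mp hA

lemma trace_mul_diagonal (M : Matrix n n R) (σ : n → R) :
    (M * diagonal σ).trace = ∑ i, M i i * σ i := by
  simp [trace, mul_diagonal]

lemma trace_mul_svd_eq_sum_diag_mul (U V O : Matrix n n R) (σ : n → R) :
    (O * (U * diagonal σ * Vᵀ)).trace = ∑ i, (Vᵀ * O * U) i i * σ i := by
  rw [← trace_mul_diagonal, ← Matrix.mul_assoc, trace_mul_comm, Matrix.mul_assoc, Matrix.mul_assoc]

end CommRing

section TraceBound

variable {n : Type*} [Fintype n] [DecidableEq n] {U V : Matrix n n ℝ}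

lemma le_one_of_transpose_mul_self_eq_one {W : Matrix n n ℝ} (hW : Wᵀ * W = 1) (i j : n) :
    W i j ≤ 1 := by
  have hcol : ∑ a, W a j ^ 2 = 1 := by
    simpa [mul_apply, sq] using congrFun (congrFun hW j) j
  have hle : W i j ^ 2 ≤ ∑ a, W a j ^ 2 :=
    Finset.single_le_sum (fun a _ => sq_nonneg (W a j)) (Finset.mem_univ i)
  nlinarith

lemma trace_mul_svd_le {O : Matrix n n ℝ} {σ : n → ℝ}
    (hU : Uᵀ * U = 1) (hV : Vᵀ * V = 1) (hσ : ∀ i, 0 ≤ σ i) (hO : Oᵀ * O = 1) :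
    (O * (U * diagonal σ * Vᵀ)).trace ≤ ∑ i, σ i := by
  have hW : (Vᵀ * O * U)ᵀ * (Vᵀ * O * U) = 1 :=
    transpose_mul_self_eq_one_mul
      (transpose_mul_self_eq_one_mul (transpose_mul_self_eq_one_transpose hV) hO) hU
  rw [trace_mul_svd_eq_sum_diag_mul]
  exact Finset.sum_le_sum fun i _ =>
    mul_le_of_le_one_left (hσ i) (le_one_of_transpose_mul_self_eq_one hW i i)

lemma trace_mul_svd_of_eq (hU : Uᵀ * U = 1) (hV : Vᵀ * V = 1) (σ : n → ℝ) :
    (V * Uᵀ * (U * diagonal σ * Vᵀ)).trace = ∑ i, σ i := by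
  rw [trace_mul_svd_eq_sum_diag_mul, ← Matrix.mul_assoc, hV, Matrix.one_mul, hU]
  simp

lemma singularValues_eq_one_of_orthogonal {σ : n → ℝ}
    (hU : Uᵀ * U = 1) (hV : Vᵀ * V = 1) (hσ : ∀ i, 0 ≤ σ i)
    (hQ : (U * diagonal σ * Vᵀ)ᵀ * (U * diagonal σ * Vᵀ) = 1) (i : n) : σ i = 1 := by
  have hconj : V * diagonal (σ * σ) * Vᵀ = 1 := by
    calc V * diagonal (σ * σ) * Vᵀ = V * (diagonal σ * (Uᵀ * U) * diagonal σ) * Vᵀ := by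
          rw [hU, Matrix.mul_one, diagonal_mul_diagonal]; rfl
      _ = (U * diagonal σ * Vᵀ)ᵀ * (U * diagonal σ * Vᵀ) := by
          simp only [transpose_mul, transpose_transpose, diagonal_transpose]
          noncomm_ring
      _ = 1 := hQ
  have hdiag : diagonal (σ * σ) = 1 := by
    calc diagonal (σ * σ) = Vᵀ * (V * diagonal (σ * σ) * Vᵀ) * V := by
          simp only [← Matrix.mul_assoc, hV, Matrix.one_mul]
          rw [Matrix.mul_assoc, hV, Matrix.mul_one]
      _ = 1 := by rw [hconj, Matrix.mul_one, hV]
  have hsq : σ i * σ i = 1 := by simpa using congrFun (congrFun hdiag i) i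
  nlinarith [hσ i]

end TraceBound

/-- For `h_i, ĥ_i ∈ O(3)` and `Q = (1/N) Σ_i ĥ_i h_iᵀ` with singular values
`σ₁,σ₂,σ₃` (from an SVD `Q = U diag(σ) Vᵀ`), the minimum over `O ∈ O(3)` of
`(1/N) Σ_i ‖h_i − O ĥ_i‖_F²` equals `6 − 2(σ₁+σ₂+σ₃)`; in particular if `Q ∈ O(3)` the
minimum is 0. -/
theorem stmt_9 (N : ℕ) (hN : 0 < N)
    (h hhat : Fin N → Matrix (Fin 3) (Fin 3) ℝ)
    (horth : ∀ i, (h i)ᵀ * h i = 1)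
    (hhatorth : ∀ i, (hhat i)ᵀ * hhat i = 1)
    (Q U V : Matrix (Fin 3) (Fin 3) ℝ) (σ : Fin 3 → ℝ)
    (hQ : Q = (N : ℝ)⁻¹ • ∑ i, hhat i * (h i)ᵀ)
    (hU : Uᵀ * U = 1) (hV : Vᵀ * V = 1) (hσ : ∀ i, 0 ≤ σ i)
    (hSVD : Q = U * Matrix.diagonal σ * Vᵀ) :
    IsLeast {y : ℝ | ∃ O : Matrix (Fin 3) (Fin 3) ℝ, Oᵀ * O = 1 ∧
        y = (N : ℝ)⁻¹ * ∑ i, (∑ a, ∑ b, (h i - O * hhat i) a b ^ 2)}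
      (6 - 2 * (σ 0 + σ 1 + σ 2))
    ∧ (Qᵀ * Q = 1 → 6 - 2 * (σ 0 + σ 1 + σ 2) = 0) := by
  have : Nonempty (Fin N) := ⟨⟨0, hN⟩⟩
  have hcost : ∀ O, Oᵀ * O = 1 →
      (N : ℝ)⁻¹ * ∑ i, (∑ a, ∑ b, (h i - O * hhat i) a b ^ 2) = 6 - 2 * (O * Q).trace := by
    intro O hO
    have := mean_sum_sum_sq_sub_mul_of_orthogonal horth hhatorth hO
    rw [Fintype.card_fin, Fintype.card_fin, ← hQ] at this
    rw [this]; norm_num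
  have hVU : (V * Uᵀ)ᵀ * (V * Uᵀ) = 1 :=
    transpose_mul_self_eq_one_mul hV (transpose_mul_self_eq_one_transpose hU)
  rw [← Fin.sum_univ_three σ]
  refine ⟨⟨⟨V * Uᵀ, hVU, ?_⟩, ?_⟩, ?_⟩
  · rw [hcost _ hVU, hSVD, trace_mul_svd_of_eq hU hV]
  · rintro y ⟨O, hO, rfl⟩
    rw [hcost O hO, hSVD]
    linarith [trace_mul_svd_le hU hV hσ hO]
  · intro hQorth
    rw [hSVD] at hQorth
    norm_num [singularValues_eq_one_of_orthogonal hU hV hσ hQorth]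
end
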